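/- arXiv:2112.00541 — 2 statements merged into one kernel-verified Lean document; each statement's English description precedes it below -/
import Mathlib

section
/- Let H be a bialgebra over a commutative ring R, F a Drinfel'd twist on H with R-matrix ℛ := F₂₁ · F⁻¹ and ℛ⁻¹ = τ(ℛ) = Σ_k R_k ⊗ R^k, and let A be an H-module algebra whose underlying algebra is commutative. Then the star-product is braided commutative: a ⋆ b = Σ_k R_k(b) ⋆ R^k(a) for all a, b ∈ A. -/
open scoped TensorProduct

noncomputable section

/-- `Δ ⊗ id` as an algebra homomorphism `H ⊗ H → (H ⊗ H) ⊗ H`. -/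
def comulTensorId (R H : Type*) [CommRing R] [Ring H] [Bialgebra R H] :
    (H ⊗[R] H) →ₐ[R] (H ⊗[R] H) ⊗[R] H :=
  Algebra.TensorProduct.map (Bialgebra.comulAlgHom R H) (AlgHom.id R H)

/-- `id ⊗ Δ` as an algebra homomorphism `H ⊗ H → H ⊗ (H ⊗ H)`. -/
def idTensorComul (R H : Type*) [CommRing R] [Ring H] [Bialgebra R H] :
    (H ⊗[R] H) →ₐ[R] H ⊗[R] (H ⊗[R] H) :=
  Algebra.TensorProduct.map (AlgHom.id R H) (Bialgebra.comulAlgHom R H)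

/-- `F` is a Drinfel'd twist on the bialgebra `H` with two-sided inverse `Finv`:
it is invertible and satisfies the 2-cocycle condition
`(F ⊗ 1) · (Δ ⊗ id)(F) = (1 ⊗ F) · (id ⊗ Δ)(F)` in `H ⊗ H ⊗ H`. -/
def IsDrinfeldTwist (R : Type*) {H : Type*} [CommRing R] [Ring H] [Bialgebra R H]
    (F Finv : H ⊗[R] H) : Prop :=
  F * Finv = 1 ∧ Finv * F = 1 ∧
    (TensorProduct.assoc R H H H) ((F ⊗ₜ[R] (1 : H)) * comulTensorId R H F) =
      ((1 : H) ⊗ₜ[R] F) * idTensorComul R H F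

/-- The `R`-matrix `ℛ := F₂₁ · F⁻¹` associated to a Drinfel'd twist, where
`F₂₁ = τ(F)` and `τ` is the flip of `H ⊗ H`. -/
def Rmat (R : Type*) {H : Type*} [CommRing R] [Ring H] [Bialgebra R H]
    (F Finv : H ⊗[R] H) : H ⊗[R] H :=
  (Algebra.TensorProduct.comm R H H) F * Finv

/-- The action of an element of `H ⊗ H` on `M ⊗ N`, acting with the first leg on `M`
and the second leg on `N` through the given representations. -/
def legAct {R H : Type*} [CommRing R] [Ring H] [Algebra R H]
    {M N : Type*} [AddCommGroup M] [Module R M] [AddCommGroup N] [Module R N]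
    (ρM : H →ₐ[R] Module.End R M) (ρN : H →ₐ[R] Module.End R N) :
    H ⊗[R] H →ₗ[R] (M ⊗[R] N →ₗ[R] M ⊗[R] N) :=
  (TensorProduct.homTensorHomMap (RingHom.id R) M N M N).comp
    (TensorProduct.map ρM.toLinearMap ρN.toLinearMap)

/-- `ρ` makes the `R`-algebra `A` into an `H`-module algebra:
`ρ(h)(a·b) = Σ ρ(h₍₁₎)(a) · ρ(h₍₂₎)(b)`. -/
def IsModuleAlgebra (R : Type*) {H A : Type*} [CommRing R] [Ring H] [Bialgebra R H]
    [Ring A] [Algebra R A] (ρ : H →ₐ[R] Module.End R A) : Prop :=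
  ∀ (h : H) (a b : A),
    ρ h (a * b) =
      LinearMap.mul' R A (legAct ρ ρ (Coalgebra.comul (R := R) h) (a ⊗ₜ[R] b))

/-- The star-product `a ⋆ b := Σ f̄ᵏ(a) · f̄ₖ(b)`, as a linear map on `A ⊗ A`. -/
def starProd {R H A : Type*} [CommRing R] [Ring H] [Bialgebra R H] [Ring A] [Algebra R A]
    (ρ : H →ₐ[R] Module.End R A) (Finv : H ⊗[R] H) : A ⊗[R] A →ₗ[R] A :=
  (LinearMap.mul' R A).comp (legAct ρ ρ Finv)

/-! The twist `F` in `τ(ℛ) = F · τ(F⁻¹)` cancels the `F⁻¹` of the star-product, so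
`Σ R_k(b) ⋆ R^k(a)` is `Σ f̄_k(b) · f̄^k(a)`, which is `a ⋆ b` because `A` is commutative. -/

section legAct

variable {R H : Type*} [CommRing R] [Ring H] [Algebra R H]
  {M N : Type*} [AddCommGroup M] [Module R M] [AddCommGroup N] [Module R N]
  (ρM : H →ₐ[R] Module.End R M) (ρN : H →ₐ[R] Module.End R N)

@[simp]
lemma legAct_tmul (h k : H) :
    legAct ρM ρN (h ⊗ₜ[R] k) = TensorProduct.map (ρM h) (ρN k) := by
  simp [legAct]

lemma legAct_one : legAct ρM ρN 1 = 1 := by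
  simp [Algebra.TensorProduct.one_def, TensorProduct.map_one]

lemma legAct_mul (x y : H ⊗[R] H) :
    legAct ρM ρN (x * y) = legAct ρM ρN x * legAct ρM ρN y := by
  induction x using TensorProduct.induction_on with
  | zero => simp
  | add x₁ x₂ h₁ h₂ => simp only [add_mul, map_add, h₁, h₂]
  | tmul h k =>
    induction y using TensorProduct.induction_on with
    | zero => simp
    | add y₁ y₂ h₁ h₂ => simp only [mul_add, map_add, h₁, h₂]
    | tmul h' k' => simp [TensorProduct.map_mul]

end legAct

lemma mul'_legAct_comm_tmul {R H A : Type*} [CommRing R] [Ring H] [Algebra R H]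
    [CommRing A] [Algebra R A] (ρ : H →ₐ[R] Module.End R A) (x : H ⊗[R] H) (a b : A) :
    LinearMap.mul' R A (legAct ρ ρ (Algebra.TensorProduct.comm R H H x) (b ⊗ₜ[R] a)) =
      LinearMap.mul' R A (legAct ρ ρ x (a ⊗ₜ[R] b)) := by
  induction x using TensorProduct.induction_on with
  | zero => simp
  | tmul h k => simp [mul_comm]
  | add x y hx hy => simp only [map_add, LinearMap.add_apply, hx, hy]

section twist

variable {R H : Type*} [CommRing R] [Ring H] [Bialgebra R H]

lemma comm_Rmat (F Finv : H ⊗[R] H) :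
    Algebra.TensorProduct.comm R H H (Rmat R F Finv) =
      F * Algebra.TensorProduct.comm R H H Finv := by
  rw [Rmat, map_mul]
  exact congrArg (· * _) (TensorProduct.comm_comm R H H F)

lemma starProd_comp_legAct_of_mul_eq_one {A : Type*} [Ring A] [Algebra R A]
    (ρ : H →ₐ[R] Module.End R A) {F Finv : H ⊗[R] H} (hF : Finv * F = 1) :
    starProd ρ Finv ∘ₗ legAct ρ ρ F = LinearMap.mul' R A := by
  rw [starProd, LinearMap.comp_assoc, ← Module.End.mul_eq_comp, ← legAct_mul, hF, legAct_one]
  rfl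

end twist

theorem starProd_braided_commutative_general
    (R : Type*) [CommRing R] (H : Type*) [Ring H] [Bialgebra R H]
    (A : Type*) [CommRing A] [Algebra R A]
    (ρ : H →ₐ[R] Module.End R A)
    (F Finv : H ⊗[R] H) (hF : IsDrinfeldTwist R F Finv) :
    ∀ a b : A,
      starProd ρ Finv (a ⊗ₜ[R] b) =
        starProd ρ Finv
          (legAct ρ ρ ((Algebra.TensorProduct.comm R H H) (Rmat R F Finv))
            (b ⊗ₜ[R] a)) := by
  intro a b
  rw [comm_Rmat, legAct_mul, Module.End.mul_apply, ← LinearMap.comp_apply,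
    starProd_comp_legAct_of_mul_eq_one ρ hF.2.1, mul'_legAct_comm_tmul]
  rfl

/-- For a Drinfel'd twist on `H` and an `H`-module algebra `A` whose
underlying algebra is commutative, the star-product is braided commutative:
`a ⋆ b = Σ R_k(b) ⋆ R^k(a)`, where `ℛ⁻¹ = τ(ℛ) = Σ_k R_k ⊗ R^k`. -/
theorem starProd_braided_commutative
    (R : Type*) [CommRing R] (H : Type*) [Ring H] [Bialgebra R H]
    (A : Type*) [CommRing A] [Algebra R A]
    (ρ : H →ₐ[R] Module.End R A) (hA : IsModuleAlgebra R ρ)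
    (F Finv : H ⊗[R] H) (hF : IsDrinfeldTwist R F Finv) :
    ∀ a b : A,
      starProd ρ Finv (a ⊗ₜ[R] b) =
        starProd ρ Finv
          (legAct ρ ρ ((Algebra.TensorProduct.comm R H H) (Rmat R F Finv))
            (b ⊗ₜ[R] a)) :=
  starProd_braided_commutative_general R H A ρ F Finv hF
end
end

section
/- Let H be a cocommutative bialgebra over a commutative ring R, F a Drinfel'd twist on H with R-matrix ℛ := F₂₁ · F⁻¹ and ℛ⁻¹ = τ(ℛ) = Σ_k R_k ⊗ R^k, and let L be a Lie algebra in H-modules equipped with an H-invariant R-bilinear form b : L × L → R (Σ b(ρ(h₍₁₎)(v), ρ(h₍₂₎)(w)) = ε(h) · b(v, w)) which is ad-invariant: b(⁅λ, x⁆, y) + b(x, ⁅λ, y⁆) = 0 for all λ, x, y ∈ L. Then the twisted pairing ⟨v, w⟩_⋆ := Σ_k b(f̄^k(v), f̄_k(w)) is invariant under the braided adjoint action with respect to the twisted bracket [x, y]_⋆ := Σ_k ⁅f̄^k(x), f̄_k(y)⁆: for all λ, x, y ∈ L, ⟨[λ, x]_⋆, y⟩_⋆ + Σ_k ⟨R_k(x),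 [R^k(λ), y]_⋆⟩_⋆ = 0. -/
open scoped TensorProduct

noncomputable section

/-- The bialgebra `H` is cocommutative: `τ ∘ Δ = Δ`. -/
def IsCocommutative (R : Type*) (H : Type*) [CommRing R] [Ring H] [Bialgebra R H] : Prop :=
  ∀ x : H, (Algebra.TensorProduct.comm R H H) (Coalgebra.comul (R := R) x) =
    Coalgebra.comul (R := R) x

/-- The Lie bracket of `L` as an `R`-bilinear map. -/
def lieBil (R L : Type*) [CommRing R] [LieRing L] [LieAlgebra R L] :
    L →ₗ[R] L →ₗ[R] L :=
  LinearMap.mk₂ R (fun x y => ⁅x, y⁆) add_lie smul_lie lie_add lie_smul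

/-- `ρ` makes the `R`-Lie algebra `L` into a Lie algebra in `H`-modules:
`ρ(h)⁅x, y⁆ = Σ ⁅ρ(h₍₁₎)(x), ρ(h₍₂₎)(y)⁆`. -/
def IsHLieAlgebra (R : Type*) {H L : Type*} [CommRing R] [Ring H] [Bialgebra R H]
    [LieRing L] [LieAlgebra R L] (ρ : H →ₐ[R] Module.End R L) : Prop :=
  ∀ (h : H) (x y : L),
    ρ h ⁅x, y⁆ =
      TensorProduct.lift (lieBil R L)
        (legAct ρ ρ (Coalgebra.comul (R := R) h) (x ⊗ₜ[R] y))

/-- The twisted bracket `[x, y]_⋆ := Σ ⁅f̄ᵏ(x), f̄ₖ(y)⁆`, as a linear map on `L ⊗ L`. -/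
def starBracket {R H L : Type*} [CommRing R] [Ring H] [Bialgebra R H]
    [LieRing L] [LieAlgebra R L] (ρ : H →ₐ[R] Module.End R L) (Finv : H ⊗[R] H) :
    L ⊗[R] L →ₗ[R] L :=
  (TensorProduct.lift (lieBil R L)).comp (legAct ρ ρ Finv)

/-- The twisted pairing `⟨v, w⟩_⋆ := Σ b(f̄ᵏ(v), f̄ₖ(w))`, as a linear map on `V ⊗ V`. -/
def starPair {R H V : Type*} [CommRing R] [Ring H] [Bialgebra R H]
    [AddCommGroup V] [Module R V] (ρ : H →ₐ[R] Module.End R V)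
    (b : V →ₗ[R] V →ₗ[R] R) (Finv : H ⊗[R] H) : V ⊗[R] V →ₗ[R] R :=
  (TensorProduct.lift b).comp (legAct ρ ρ Finv)

/-!
Put `C := (Δ ⊗ id)(F⁻¹) · (F⁻¹ ⊗ 1)`. Because `ρ` intertwines the bracket, the first term is
`b ∘ (⁅·,·⁆ ⊗ id)` evaluated at `C · (λ ⊗ x ⊗ y)`. The cocycle condition turns
`(id ⊗ Δ)(F⁻¹) · (1 ⊗ F⁻¹)` into the reassociated `C`, and cocommutativity gives
`τ₁₂(C) = C · (τ(ℛ) ⊗ 1)`, so the second term is `b ∘ (id ⊗ ⁅·,·⁆)` evaluated at the same tensor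
with its first two legs flipped. The sum vanishes by ad-invariance of `b`, applied to that tensor.
-/

open TensorProduct LinearMap

section TensorRep

variable {R : Type*} [CommRing R]
  {H₁ H₂ H₃ : Type*} [Ring H₁] [Algebra R H₁] [Ring H₂] [Algebra R H₂] [Ring H₃] [Algebra R H₃]
  {M₁ M₂ M₃ : Type*} [AddCommGroup M₁] [Module R M₁] [AddCommGroup M₂] [Module R M₂]
  [AddCommGroup M₃] [Module R M₃]

def tensorRep (ρ₁ : H₁ →ₐ[R] Module.End R M₁) (ρ₂ : H₂ →ₐ[R] Module.End R M₂) :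
    H₁ ⊗[R] H₂ →ₐ[R] Module.End R (M₁ ⊗[R] M₂) :=
  Module.endTensorEndAlgHom.comp (Algebra.TensorProduct.map ρ₁ ρ₂)

@[simp]
theorem tensorRep_tmul (ρ₁ : H₁ →ₐ[R] Module.End R M₁) (ρ₂ : H₂ →ₐ[R] Module.End R M₂)
    (h₁ : H₁) (h₂ : H₂) : tensorRep ρ₁ ρ₂ (h₁ ⊗ₜ h₂) = map (ρ₁ h₁) (ρ₂ h₂) :=
  rfl

theorem legAct_eq_tensorRep (ρ₁ : H₁ →ₐ[R] Module.End R M₁) (ρ₂ : H₁ →ₐ[R] Module.End R M₂) :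
    legAct ρ₁ ρ₂ = (tensorRep ρ₁ ρ₂).toLinearMap := by
  ext h₁ h₂ : 3
  simp [legAct]

variable (ρ₁ : H₁ →ₐ[R] Module.End R M₁) (ρ₂ : H₂ →ₐ[R] Module.End R M₂)
  (ρ₃ : H₃ →ₐ[R] Module.End R M₃)

theorem tensorRep_assoc (G : (H₁ ⊗[R] H₂) ⊗[R] H₃) :
    tensorRep ρ₁ (tensorRep ρ₂ ρ₃) (Algebra.TensorProduct.assoc R R R H₁ H₂ H₃ G) ∘ₗ
        (TensorProduct.assoc R M₁ M₂ M₃).toLinearMap =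
      (TensorProduct.assoc R M₁ M₂ M₃).toLinearMap ∘ₗ tensorRep (tensorRep ρ₁ ρ₂) ρ₃ G := by
  induction G using TensorProduct.induction_on with
  | zero => simp
  | add G₁ G₂ h₁ h₂ => simp only [map_add, add_comp, comp_add, h₁, h₂]
  | tmul a h₃ =>
    induction a using TensorProduct.induction_on with
    | zero => simp
    | add a₁ a₂ h₁ h₂ => simp only [add_tmul, map_add, add_comp, comp_add, h₁, h₂]
    | tmul h₁ h₂ => ext; simp

theorem tensorRep_map_comm (G : (H₁ ⊗[R] H₂) ⊗[R] H₃) :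
    tensorRep (tensorRep ρ₂ ρ₁) ρ₃
        (Algebra.TensorProduct.map (Algebra.TensorProduct.comm R H₁ H₂).toAlgHom
          (AlgHom.id R H₃) G) ∘ₗ rTensor M₃ (TensorProduct.comm R M₁ M₂).toLinearMap =
      rTensor M₃ (TensorProduct.comm R M₁ M₂).toLinearMap ∘ₗ
        tensorRep (tensorRep ρ₁ ρ₂) ρ₃ G := by
  induction G using TensorProduct.induction_on with
  | zero => simp
  | add G₁ G₂ h₁ h₂ => simp only [map_add, add_comp, comp_add, h₁, h₂]
  | tmul a h₃ =>
    induction a using TensorProduct.induction_on with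
    | zero => simp
    | add a₁ a₂ h₁ h₂ => simp only [add_tmul, map_add, add_comp, comp_add, h₁, h₂]
    | tmul h₁ h₂ => ext; simp

end TensorRep

@[simp]
theorem lieBil_apply {R L : Type*} [CommRing R] [LieRing L] [LieAlgebra R L] (x y : L) :
    lieBil R L x y = ⁅x, y⁆ :=
  rfl

theorem lift_comp_rTensor_lie_add_eq_zero {R L V : Type*} [CommRing R] [LieRing L]
    [LieAlgebra R L] [AddCommGroup V] [Module R V] (b : L →ₗ[R] L →ₗ[R] V)
    (hb : ∀ l x y : L, b ⁅l, x⁆ y + b x ⁅l, y⁆ = 0) :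
    lift b ∘ₗ rTensor L (lift (lieBil R L)) +
        lift b ∘ₗ lTensor L (lift (lieBil R L)) ∘ₗ (TensorProduct.assoc R L L L).toLinearMap ∘ₗ
          rTensor L (TensorProduct.comm R L L).toLinearMap = 0 := by
  ext l x y
  simpa using hb l x y

namespace IsHLieAlgebra

variable {R H L : Type*} [CommRing R] [Ring H] [Bialgebra R H] [LieRing L] [LieAlgebra R L]
  {ρ : H →ₐ[R] Module.End R L}

theorem tensorRep_comp_rTensor (hL : IsHLieAlgebra R ρ) (G : H ⊗[R] H) :
    tensorRep ρ ρ G ∘ₗ rTensor L (lift (lieBil R L)) =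
      rTensor L (lift (lieBil R L)) ∘ₗ tensorRep (tensorRep ρ ρ) ρ (comulTensorId R H G) := by
  induction G using TensorProduct.induction_on with
  | zero => simp
  | add G₁ G₂ h₁ h₂ => simp only [map_add, add_comp, comp_add, h₁, h₂]
  | tmul h k => ext x y z; simp [comulTensorId, hL h, legAct_eq_tensorRep]

theorem tensorRep_comp_lTensor (hL : IsHLieAlgebra R ρ) (G : H ⊗[R] H) :
    tensorRep ρ ρ G ∘ₗ lTensor L (lift (lieBil R L)) =
      lTensor L (lift (lieBil R L)) ∘ₗ tensorRep ρ (tensorRep ρ ρ) (idTensorComul R H G) := by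
  induction G using TensorProduct.induction_on with
  | zero => simp
  | add G₁ G₂ h₁ h₂ => simp only [map_add, add_comp, comp_add, h₁, h₂]
  | tmul h k => ext x y z; simp [idTensorComul, hL k, legAct_eq_tensorRep]

end IsHLieAlgebra

section Twist

variable {R H : Type*} [CommRing R] [Ring H] [Bialgebra R H]

theorem mul_mul_mul_eq_one {M : Type*} [Monoid M] {a a' b b' : M} (ha : a * a' = 1)
    (hb : b * b' = 1) : a * b * (b' * a') = 1 := by
  rw [mul_assoc, ← mul_assoc b, hb, one_mul, ha]

variable (R) in
/-- The inverse of the left-hand side `(F ⊗ 1) · (Δ ⊗ id)(F)` of the cocycle condition. -/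
def tripleTwistInv (Finv : H ⊗[R] H) : (H ⊗[R] H) ⊗[R] H :=
  comulTensorId R H Finv * (Finv ⊗ₜ 1)

theorem IsDrinfeldTwist.assoc_tripleTwistInv {F Finv : H ⊗[R] H}
    (hF : IsDrinfeldTwist R F Finv) :
    Algebra.TensorProduct.assoc R R R H H H (tripleTwistInv R Finv) =
      idTensorComul R H Finv * (1 ⊗ₜ Finv) := by
  obtain ⟨hFFinv, hFinvF, hcocycle⟩ := hF
  have hleft : F ⊗ₜ[R] (1 : H) * comulTensorId R H F * tripleTwistInv R Finv = 1 :=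
    mul_mul_mul_eq_one
      (by rw [Algebra.TensorProduct.tmul_mul_tmul, hFFinv, one_mul,
        ← Algebra.TensorProduct.one_def])
      (by rw [← map_mul, hFFinv, map_one])
  have hright : idTensorComul R H Finv * (1 ⊗ₜ Finv) *
      ((1 : H) ⊗ₜ[R] F * idTensorComul R H F) = 1 :=
    mul_mul_mul_eq_one (by rw [← map_mul, hFinvF, map_one])
      (by rw [Algebra.TensorProduct.tmul_mul_tmul, hFinvF, one_mul,
        ← Algebra.TensorProduct.one_def])
  have hcocycle' : Algebra.TensorProduct.assoc R R R H H H
      (F ⊗ₜ[R] (1 : H) * comulTensorId R H F) = (1 : H) ⊗ₜ[R] F * idTensorComul R H F :=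
    hcocycle
  refine (left_inv_eq_right_inv hright ?_).symm
  rw [← hcocycle', ← map_mul, hleft, map_one]

theorem IsCocommutative.map_comm_comulTensorId (hcc : IsCocommutative R H) (G : H ⊗[R] H) :
    Algebra.TensorProduct.map (Algebra.TensorProduct.comm R H H).toAlgHom (AlgHom.id R H)
      (comulTensorId R H G) = comulTensorId R H G := by
  induction G using TensorProduct.induction_on with
  | zero => simp
  | add G₁ G₂ h₁ h₂ => simp only [map_add, h₁, h₂]
  | tmul h k => simpa [comulTensorId] using congrArg (· ⊗ₜ[R] k) (hcc h)

theorem IsCocommutative.map_comm_tripleTwistInv (hcc : IsCocommutative R H)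
    {F Finv : H ⊗[R] H} (hFinvF : Finv * F = 1) :
    Algebra.TensorProduct.map (Algebra.TensorProduct.comm R H H).toAlgHom (AlgHom.id R H)
        (tripleTwistInv R Finv) =
      tripleTwistInv R Finv * (Algebra.TensorProduct.comm R H H (Rmat R F Finv) ⊗ₜ 1) := by
  have hττ : Algebra.TensorProduct.comm R H H (Algebra.TensorProduct.comm R H H F) = F :=
    TensorProduct.comm_comm R H H F
  rw [tripleTwistInv, map_mul, hcc.map_comm_comulTensorId, Rmat, map_mul, hττ, mul_assoc,
    Algebra.TensorProduct.tmul_mul_tmul, ← mul_assoc Finv, hFinvF, one_mul, one_mul]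
  rfl

end Twist

section StarPair

variable {R H L : Type*} [CommRing R] [Ring H] [Bialgebra R H] [LieRing L] [LieAlgebra R L]
  {ρ : H →ₐ[R] Module.End R L}

theorem starPair_comp_rTensor_starBracket (hL : IsHLieAlgebra R ρ) (b : L →ₗ[R] L →ₗ[R] R)
    (Finv : H ⊗[R] H) :
    starPair ρ b Finv ∘ₗ rTensor L (starBracket ρ Finv) =
      lift b ∘ₗ rTensor L (lift (lieBil R L)) ∘ₗ
        tensorRep (tensorRep ρ ρ) ρ (tripleTwistInv R Finv) := by
  have hleg : rTensor L (tensorRep ρ ρ Finv) = tensorRep (tensorRep ρ ρ) ρ (Finv ⊗ₜ 1) := by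
    rw [tensorRep_tmul, map_one]
    rfl
  calc starPair ρ b Finv ∘ₗ rTensor L (starBracket ρ Finv)
      = lift b ∘ₗ (tensorRep ρ ρ Finv ∘ₗ rTensor L (lift (lieBil R L))) ∘ₗ
          rTensor L (tensorRep ρ ρ Finv) := by
        rw [starPair, starBracket, legAct_eq_tensorRep, rTensor_comp]
        rfl
    _ = lift b ∘ₗ rTensor L (lift (lieBil R L)) ∘ₗ
          (tensorRep (tensorRep ρ ρ) ρ (comulTensorId R H Finv) *
            tensorRep (tensorRep ρ ρ) ρ (Finv ⊗ₜ 1)) := by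
        rw [hL.tensorRep_comp_rTensor, hleg]
        rfl
    _ = _ := by rw [← map_mul, tripleTwistInv]

theorem starPair_comp_lTensor_starBracket (hL : IsHLieAlgebra R ρ) (b : L →ₗ[R] L →ₗ[R] R)
    (Finv : H ⊗[R] H) :
    starPair ρ b Finv ∘ₗ lTensor L (starBracket ρ Finv) =
      lift b ∘ₗ lTensor L (lift (lieBil R L)) ∘ₗ
        tensorRep ρ (tensorRep ρ ρ) (idTensorComul R H Finv * (1 ⊗ₜ Finv)) := by
  have hleg : lTensor L (tensorRep ρ ρ Finv) = tensorRep ρ (tensorRep ρ ρ) (1 ⊗ₜ Finv) := by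
    rw [tensorRep_tmul, map_one]
    rfl
  calc starPair ρ b Finv ∘ₗ lTensor L (starBracket ρ Finv)
      = lift b ∘ₗ (tensorRep ρ ρ Finv ∘ₗ lTensor L (lift (lieBil R L))) ∘ₗ
          lTensor L (tensorRep ρ ρ Finv) := by
        rw [starPair, starBracket, legAct_eq_tensorRep, lTensor_comp]
        rfl
    _ = lift b ∘ₗ lTensor L (lift (lieBil R L)) ∘ₗ
          (tensorRep ρ (tensorRep ρ ρ) (idTensorComul R H Finv) *
            tensorRep ρ (tensorRep ρ ρ) (1 ⊗ₜ Finv)) := by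
        rw [hL.tensorRep_comp_lTensor, hleg]
        rfl
    _ = _ := by rw [← map_mul]

theorem starPair_comp_lTensor_starBracket_comp_braiding (hcc : IsCocommutative R H)
    (hL : IsHLieAlgebra R ρ) (b : L →ₗ[R] L →ₗ[R] R) {F Finv : H ⊗[R] H}
    (hF : IsDrinfeldTwist R F Finv) :
    starPair ρ b Finv ∘ₗ lTensor L (starBracket ρ Finv) ∘ₗ
        (TensorProduct.assoc R L L L).toLinearMap ∘ₗ
        tensorRep (tensorRep ρ ρ) ρ (Algebra.TensorProduct.comm R H H (Rmat R F Finv) ⊗ₜ 1) ∘ₗ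
        rTensor L (TensorProduct.comm R L L).toLinearMap =
      lift b ∘ₗ lTensor L (lift (lieBil R L)) ∘ₗ (TensorProduct.assoc R L L L).toLinearMap ∘ₗ
        rTensor L (TensorProduct.comm R L L).toLinearMap ∘ₗ
        tensorRep (tensorRep ρ ρ) ρ (tripleTwistInv R Finv) := by
  set ρ₃ := tensorRep (tensorRep ρ ρ) ρ
  set α := (TensorProduct.assoc R L L L).toLinearMap
  set σ := rTensor L (TensorProduct.comm R L L).toLinearMap
  calc starPair ρ b Finv ∘ₗ lTensor L (starBracket ρ Finv) ∘ₗ α ∘ₗ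
        ρ₃ (Algebra.TensorProduct.comm R H H (Rmat R F Finv) ⊗ₜ 1) ∘ₗ σ
      = lift b ∘ₗ lTensor L (lift (lieBil R L)) ∘ₗ
          (tensorRep ρ (tensorRep ρ ρ)
            (Algebra.TensorProduct.assoc R R R H H H (tripleTwistInv R Finv)) ∘ₗ α) ∘ₗ
          ρ₃ (Algebra.TensorProduct.comm R H H (Rmat R F Finv) ⊗ₜ 1) ∘ₗ σ := by
        rw [← comp_assoc, starPair_comp_lTensor_starBracket hL, hF.assoc_tripleTwistInv]
        rfl
    _ = lift b ∘ₗ lTensor L (lift (lieBil R L)) ∘ₗ α ∘ₗ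
          ρ₃ (Algebra.TensorProduct.map (Algebra.TensorProduct.comm R H H).toAlgHom
            (AlgHom.id R H) (tripleTwistInv R Finv)) ∘ₗ σ := by
        rw [tensorRep_assoc, hcc.map_comm_tripleTwistInv hF.2.1, map_mul]
        rfl
    _ = _ := by rw [tensorRep_map_comm]

end StarPair

theorem starPair_braided_ad_invariant_general
    (R : Type*) [CommRing R] (H : Type*) [Ring H] [Bialgebra R H]
    (hcc : IsCocommutative R H)
    (L : Type*) [LieRing L] [LieAlgebra R L]
    (ρ : H →ₐ[R] Module.End R L) (hL : IsHLieAlgebra R ρ)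
    (b : L →ₗ[R] L →ₗ[R] R)
    (hbad : ∀ l x y : L, b ⁅l, x⁆ y + b x ⁅l, y⁆ = 0)
    (F Finv : H ⊗[R] H) (hF : IsDrinfeldTwist R F Finv) :
    ∀ l x y : L,
      starPair ρ b Finv ((starBracket ρ Finv (l ⊗ₜ[R] x)) ⊗ₜ[R] y) +
          ((starPair ρ b Finv).comp
              (TensorProduct.map LinearMap.id (starBracket ρ Finv)))
            ((TensorProduct.assoc R L L L)
              ((legAct ρ ρ ((Algebra.TensorProduct.comm R H H) (Rmat R F Finv))
                  (x ⊗ₜ[R] l)) ⊗ₜ[R] y)) = 0 := by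
  intro l x y
  have hbracket := congr($(starPair_comp_rTensor_starBracket hL b Finv) ((l ⊗ₜ x) ⊗ₜ y))
  have hbraided := congr($(starPair_comp_lTensor_starBracket_comp_braiding hcc hL b hF)
    ((l ⊗ₜ x) ⊗ₜ y))
  have hinv := congr($(lift_comp_rTensor_lie_add_eq_zero b hbad)
    (tensorRep (tensorRep ρ ρ) ρ (tripleTwistInv R Finv) ((l ⊗ₜ x) ⊗ₜ y)))
  simp only [comp_apply, LinearMap.add_apply, LinearMap.zero_apply] at hbracket hbraided hinv
  rw [← hbracket, ← hbraided] at hinv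
  change _ + starPair ρ b Finv (lTensor L (starBracket ρ Finv) _) = 0
  simpa [legAct_eq_tensorRep] using hinv

/-- For a Drinfel'd twist on a cocommutative bialgebra `H` and a Lie
algebra `L` in `H`-modules with an `H`-invariant, ad-invariant bilinear form `b`, the
twisted pairing is invariant under the braided adjoint action:
`⟨[λ, x]_⋆, y⟩_⋆ + Σ_k ⟨R_k(x), [R^k(λ), y]_⋆⟩_⋆ = 0`,
where `ℛ⁻¹ = τ(ℛ) = Σ_k R_k ⊗ R^k`. -/
theorem starPair_braided_ad_invariant
    (R : Type*) [CommRing R] (H : Type*) [Ring H] [Bialgebra R H]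
    (hcc : IsCocommutative R H)
    (L : Type*) [LieRing L] [LieAlgebra R L]
    (ρ : H →ₐ[R] Module.End R L) (hL : IsHLieAlgebra R ρ)
    (b : L →ₗ[R] L →ₗ[R] R)
    (hbinv : ∀ (h : H) (v w : L),
      TensorProduct.lift b (legAct ρ ρ (Coalgebra.comul (R := R) h) (v ⊗ₜ[R] w)) =
        Coalgebra.counit (R := R) h * b v w)
    (hbad : ∀ l x y : L, b ⁅l, x⁆ y + b x ⁅l, y⁆ = 0)
    (F Finv : H ⊗[R] H) (hF : IsDrinfeldTwist R F Finv) :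
    ∀ l x y : L,
      starPair ρ b Finv ((starBracket ρ Finv (l ⊗ₜ[R] x)) ⊗ₜ[R] y) +
          ((starPair ρ b Finv).comp
              (TensorProduct.map LinearMap.id (starBracket ρ Finv)))
            ((TensorProduct.assoc R L L L)
              ((legAct ρ ρ ((Algebra.TensorProduct.comm R H H) (Rmat R F Finv))
                  (x ⊗ₜ[R] l)) ⊗ₜ[R] y)) = 0 :=
  starPair_braided_ad_invariant_general R H hcc L ρ hL b hbad F Finv hF
end
end
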